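/- Let S be a sub-semifield of 𝕋 (with S ≠ 𝔹), let A be a topological S-algebra with structure map ι : S → A, and let P ∈ Cont A, witnessed by a totally ordered semifield K with its canonical topology and a continuous semiring homomorphism v : A → K with congruence kernel P and image containing an element other than 0 and 1. Then for every a ∈ S with a > 1 and every element x of the subgroup of K^× generated by the nonzero values of v, if x > 1 then there exists n ∈ ℕ with x ≤ (v(ι(a)))^n. (That is, the group of units of the residue semifield κ(P) has a smallest archimedean equivalence class, which is the class of |a|_P for any a ∈ S greater than 1.) -/

import Mathlib

/-- A totally ordered idempotent semifield, assumed different from the Boolean semifield `𝔹`. -/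
class IdemTOSemifield (K : Type*) extends CommSemiring K, LinearOrder K where
  add_eq_max : ∀ a b : K, a + b = max a b
  exists_inv : ∀ a : K, a ≠ 0 → ∃ b : K, a * b = 1
  exists_nontrivial_unit : ∃ a : K, a ≠ 0 ∧ a ≠ 1

/-- The canonical topology on a totally ordered semifield. -/
def canonicalTopology (K : Type*) [IdemTOSemifield K] : TopologicalSpace K :=
  TopologicalSpace.generateFrom
    {s : Set K | (∃ a : K, a ≠ 0 ∧ s = {a}) ∨ (∃ a : K, a ≠ 0 ∧ s = Set.Iic a)}

private theorem nnreal_mul_max (a b c : NNReal) : a * max b c = max (a * b) (a * c) := by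
  rcases le_total b c with h | h
  · rw [max_eq_right h, max_eq_right (mul_le_mul_of_nonneg_left h (zero_le : (0 : NNReal) ≤ a))]
  · rw [max_eq_left h, max_eq_left (mul_le_mul_of_nonneg_left h (zero_le : (0 : NNReal) ≤ a))]

private theorem nnreal_max_mul (a b c : NNReal) : max a b * c = max (a * c) (b * c) := by
  rcases le_total a b with h | h
  · rw [max_eq_right h, max_eq_right (mul_le_mul_of_nonneg_right h (zero_le : (0 : NNReal) ≤ c))]
  · rw [max_eq_left h, max_eq_left (mul_le_mul_of_nonneg_right h (zero_le : (0 : NNReal) ≤ c))]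

/-- The tropical semifield `𝕋`, modelled as `[0, ∞)` with addition `max` and the usual
multiplication. -/
def Trop : Type := NNReal

namespace Trop

/-- Regard a nonnegative real as an element of `Trop`. -/
def mk (x : NNReal) : Trop := x

/-- The underlying nonnegative real of an element of `Trop`. -/
def toNNReal (x : Trop) : NNReal := x

noncomputable instance instLinearOrder : LinearOrder Trop :=
  inferInstanceAs (LinearOrder NNReal)

noncomputable instance instAdd : Add Trop := ⟨fun a b => max a b⟩
instance instZero : Zero Trop := inferInstanceAs (Zero NNReal)
instance instMul : Mul Trop := inferInstanceAs (Mul NNReal)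
instance instOne : One Trop := inferInstanceAs (One NNReal)

noncomputable instance instCommSemiring : CommSemiring Trop where
  __ := (inferInstanceAs (CommMonoidWithZero NNReal) : CommMonoidWithZero NNReal)
  add a b := a + b
  nsmul := nsmulRec
  add_assoc a b c := max_assoc a b c
  zero_add a := max_eq_right (zero_le : (0 : NNReal) ≤ toNNReal a)
  add_zero a := max_eq_left (zero_le : (0 : NNReal) ≤ toNNReal a)
  add_comm a b := max_comm a b
  left_distrib a b c := by exact nnreal_mul_max a b c
  right_distrib a b c := by exact nnreal_max_mul a b c

noncomputable instance instIdemTOSemifield : IdemTOSemifield Trop where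
  add_eq_max a b := rfl
  exists_inv a ha :=
    ⟨mk (toNNReal a)⁻¹, by exact mul_inv_cancel₀ (a := toNNReal a) (fun h => ha h)⟩
  exists_nontrivial_unit :=
    ⟨mk 2, fun h => two_ne_zero (show (2 : NNReal) = 0 from h),
      fun h => by
        have : (2 : NNReal) = 1 := h
        norm_num at this⟩

end Trop

/-- `S` is (isomorphic to) a sub-semifield of the tropical semifield `𝕋` (and `S ≠ 𝔹`). -/
class TropSub (S : Type*) extends IdemTOSemifield S where
  emb : S →+* Trop
  emb_injective : Function.Injective emb

/-!
Statement 9: for a topological `S`-algebra `A` (with `S` a sub-semifield of `𝕋`) and a prime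
congruence `P ∈ Cont A`, witnessed by a continuous homomorphism `v : A → K` to a totally ordered
semifield, the group of units of the residue semifield of `P` has a smallest archimedean class,
namely that of `|a|_P` for any `a ∈ S` with `a > 1`.
-/

section Aux

variable {K : Type*} [IdemTOSemifield K]

private theorem IdemTOSemifield.le_iff_add {a b : K} : a ≤ b ↔ a + b = b := by
  rw [IdemTOSemifield.add_eq_max, max_eq_right_iff]

private theorem IdemTOSemifield.zero_le' (a : K) : (0 : K) ≤ a :=
  IdemTOSemifield.le_iff_add.mpr (zero_add a)

private theorem IdemTOSemifield.mul_le_mul_right' {a b : K} (h : a ≤ b) (c : K) :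
    a * c ≤ b * c := by
  refine IdemTOSemifield.le_iff_add.mpr ?_
  rw [← add_mul, IdemTOSemifield.le_iff_add.mp h]

private theorem IdemTOSemifield.one_ne_zero' : (1 : K) ≠ 0 := by
  intro h
  obtain ⟨a, ha0, -⟩ := IdemTOSemifield.exists_nontrivial_unit (K := K)
  exact ha0 (by rw [← mul_one a, h, mul_zero])

/-- In an idempotent totally ordered semifield, any open neighborhood of `0`
(for the canonical topology) contains an interval `Set.Iic c` with `c ≠ 0`. -/
private theorem exists_Iic_subset (U : Set K)
    (hU : TopologicalSpace.GenerateOpen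
      {s : Set K | (∃ a : K, a ≠ 0 ∧ s = {a}) ∨ (∃ a : K, a ≠ 0 ∧ s = Set.Iic a)} U) :
    (0 : K) ∈ U → ∃ c : K, c ≠ 0 ∧ Set.Iic c ⊆ U := by
  induction hU with
  | basic s hs =>
    intro h0
    rcases hs with ⟨a, ha, rfl⟩ | ⟨a, ha, rfl⟩
    · exact absurd h0.symm ha
    · exact ⟨a, ha, subset_rfl⟩
  | univ =>
    intro _
    exact ⟨1, IdemTOSemifield.one_ne_zero', fun _ _ => trivial⟩
  | inter s t _ _ ihs iht =>
    rintro ⟨h0s, h0t⟩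
    obtain ⟨c₁, hc₁, hs⟩ := ihs h0s
    obtain ⟨c₂, hc₂, ht⟩ := iht h0t
    rcases le_total c₁ c₂ with h | h
    · exact ⟨c₁, hc₁, fun x hx => ⟨hs hx, ht (le_trans hx h)⟩⟩
    · exact ⟨c₂, hc₂, fun x hx => ⟨hs (le_trans hx h), ht hx⟩⟩
  | sUnion T _ ih =>
    rintro ⟨s, hsT, h0s⟩
    obtain ⟨c, hc, hsub⟩ := ih s hsT h0s
    exact ⟨c, hc, fun x hx => ⟨s, hsT, hsub hx⟩⟩

end Aux

section TropAux

private theorem trop_add_eq_max (x y : Trop) : x + y = max x y := rfl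

/-- The embedding of a sub-semifield of `𝕋` is monotone. -/
private theorem TropSub.emb_mono {S : Type*} [TropSub S] : Monotone (⇑(TropSub.emb (S := S))) := by
  intro b c h
  have h1 : TropSub.emb (S := S) b + TropSub.emb (S := S) c = TropSub.emb (S := S) c := by
    rw [← map_add, IdemTOSemifield.le_iff_add.mp h]
  rw [trop_add_eq_max] at h1
  exact max_eq_right_iff.mp h1

private theorem TropSub.emb_strictMono {S : Type*} [TropSub S] :
    StrictMono (⇑(TropSub.emb (S := S))) :=
  TropSub.emb_mono.strictMono_of_injective TropSub.emb_injective

/-- Archimedean property inherited from `𝕋`: powers of `b < 1` are eventually below any `c ≠ 0`. -/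
private theorem exists_pow_le_of_lt_one {S : Type*} [TropSub S] {b c : S} (hb : b < 1)
    (hc : c ≠ 0) : ∃ n : ℕ, b ^ n ≤ c := by
  set e := TropSub.emb (S := S) with he
  have heb : (Trop.toNNReal (e b) : ℝ) < 1 := by
    have := TropSub.emb_strictMono hb
    rw [map_one] at this
    exact_mod_cast this
  have hec : (0 : ℝ) < (Trop.toNNReal (e c) : ℝ) := by
    have : e c ≠ 0 := fun h => hc (TropSub.emb_injective (by rw [h, map_zero]))
    have : Trop.toNNReal (e c) ≠ 0 := this
    exact_mod_cast pos_iff_ne_zero.mpr this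
  obtain ⟨n, hn⟩ := exists_pow_lt_of_lt_one hec heb
  refine ⟨n, ?_⟩
  have : e (b ^ n) ≤ e c := by
    rw [map_pow]
    show Trop.toNNReal (e b) ^ n ≤ Trop.toNNReal (e c)
    have : ((Trop.toNNReal (e b) : ℝ)) ^ n ≤ (Trop.toNNReal (e c) : ℝ) := by
      calc ((Trop.toNNReal (e b) : ℝ)) ^ n = ((Trop.toNNReal (e b) : ℝ)) ^ n := rfl
        _ ≤ _ := le_of_lt hn
    exact_mod_cast this
  exact (TropSub.emb_strictMono.le_iff_le).mp this

end TropAux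

/-- Key continuity lemma: for a continuous map `g : S → A` with `v (g 0) ≤ y` (`y ≠ 0`),
some `g (b ^ n)` with `b < 1` has `v`-value at most `y`. -/
private theorem key_small {S A K : Type*} [TropSub S] [CommSemiring A] [tA : TopologicalSpace A]
    [IdemTOSemifield K] (v : A →+* K)
    (hv : @Continuous A K tA (canonicalTopology K) v)
    (g : S → A) (hg : @Continuous S A (canonicalTopology S) tA g)
    {b : S} (hb : b < 1) {y : K} (hy : y ≠ 0) (h0 : v (g 0) ≤ y) :
    ∃ n : ℕ, v (g (b ^ n)) ≤ y := by
  letI tS : TopologicalSpace S := canonicalTopology S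
  letI tK : TopologicalSpace K := canonicalTopology K
  have hU : IsOpen (⇑v ⁻¹' Set.Iic y) :=
    hv.isOpen_preimage _ (TopologicalSpace.GenerateOpen.basic _ (Or.inr ⟨y, hy, rfl⟩))
  have hW : IsOpen (g ⁻¹' (⇑v ⁻¹' Set.Iic y)) := hg.isOpen_preimage _ hU
  obtain ⟨c, hc, hsub⟩ := exists_Iic_subset _ hW h0
  obtain ⟨n, hn⟩ := exists_pow_le_of_lt_one hb hc
  exact ⟨n, hsub hn⟩


theorem residue_units_smallest_archimedean_class {S A K : Type*} [TropSub S] [CommSemiring A]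
    [tA : TopologicalSpace A] [ContinuousAdd A] [ContinuousMul A]
    (ι : S →+* A) (hι : @Continuous S A (canonicalTopology S) tA ι)
    [IdemTOSemifield K] (v : A →+* K)
    (hv : @Continuous A K tA (canonicalTopology K) v)
    (P : RingCon A) (hker : ∀ f g : A, P f g ↔ v f = v g)
    (him : ∃ x : K, x ∈ Set.range ⇑v ∧ x ≠ 0 ∧ x ≠ 1) :
    ∀ a : S, 1 < a → ∀ x : Kˣ,
      x ∈ Subgroup.closure {u : Kˣ | (u : K) ∈ Set.range ⇑v} →
      1 < (x : K) → ∃ m : ℕ, (x : K) ≤ v (ι a) ^ m := by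
  intro a ha x hx _
  have ha0 : a ≠ 0 := by
    intro h
    exact absurd (IdemTOSemifield.zero_le' (1 : S)) (not_le.mpr (h ▸ ha))
  obtain ⟨b, hab⟩ := IdemTOSemifield.exists_inv a ha0
  set t := v (ι a) with htdef
  set w := v (ι b) with hwdef
  have hwt : w * t = 1 := by
    rw [htdef, hwdef, ← map_mul, ← map_mul, mul_comm b a, hab, map_one, map_one]
  have hb1 : b < 1 := by
    by_contra h
    push_neg at h
    have h2 := IdemTOSemifield.mul_le_mul_right' h a
    rw [one_mul, mul_comm b a, hab] at h2
    exact absurd h2 (not_le.mpr ha)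
  have hmul : ∀ (u z : K) (m k : ℕ), u ≤ t ^ m → z ≤ t ^ k → u * z ≤ t ^ (m + k) := by
    intro u z m k hu hz
    calc u * z ≤ t ^ m * z := IdemTOSemifield.mul_le_mul_right' hu z
      _ = z * t ^ m := mul_comm _ _
      _ ≤ t ^ k * t ^ m := IdemTOSemifield.mul_le_mul_right' hz _
      _ = t ^ (m + k) := by rw [← pow_add, add_comm]
  have hgen : ∀ u : Kˣ, (u : K) ∈ Set.range ⇑v →
      (∃ m, (u : K) ≤ t ^ m) ∧ (∃ m, ((u⁻¹ : Kˣ) : K) ≤ t ^ m) := by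
    rintro u ⟨f, hf⟩
    have h1K0 : (1 : K) ≠ 0 := IdemTOSemifield.one_ne_zero'
    have hu0 : (u : K) ≠ 0 := by
      intro h
      exact h1K0 (by rw [← u.mul_inv, h, zero_mul])
    constructor
    · have hg : @Continuous S A (canonicalTopology S) tA (fun s => ι s * f) := by
        letI := canonicalTopology S
        exact (continuous_mul_right f).comp hι
      have h0 : v ((fun s => ι s * f) 0) ≤ 1 := by
        simp only [map_zero, zero_mul]
        exact IdemTOSemifield.zero_le' 1
      obtain ⟨n, hn⟩ := key_small v hv _ hg hb1 h1K0 h0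
      refine ⟨n, ?_⟩
      have hwn : w ^ n * (u : K) ≤ 1 := by
        rw [hwdef, ← hf, ← map_pow, ← map_pow, ← map_mul]
        exact hn
      have h3 := IdemTOSemifield.mul_le_mul_right' hwn (t ^ n)
      rw [one_mul] at h3
      calc (u : K) = (w ^ n * (u : K)) * t ^ n := by
            rw [mul_comm (w ^ n), mul_assoc, ← mul_pow, hwt, one_pow, mul_one]
        _ ≤ t ^ n := h3
    · have h0 : v (ι 0) ≤ (u : K) := by
        rw [map_zero, map_zero]
        exact IdemTOSemifield.zero_le' _
      obtain ⟨n, hn⟩ := key_small v hv _ hι hb1 hu0 h0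
      refine ⟨n, ?_⟩
      have hwn : w ^ n ≤ (u : K) := by
        rw [hwdef, ← map_pow, ← map_pow]
        exact hn
      have h2 := IdemTOSemifield.mul_le_mul_right' hwn (((u⁻¹ : Kˣ) : K) * t ^ n)
      calc ((u⁻¹ : Kˣ) : K) = w ^ n * (((u⁻¹ : Kˣ) : K) * t ^ n) := by
            rw [← mul_assoc, mul_comm (w ^ n), mul_assoc, ← mul_pow, hwt, one_pow, mul_one]
        _ ≤ (u : K) * (((u⁻¹ : Kˣ) : K) * t ^ n) := h2
        _ = t ^ n := by rw [← mul_assoc, u.mul_inv, one_mul]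
  have hmem := Subgroup.closure_induction
    (p := fun u (_ : u ∈ Subgroup.closure {u : Kˣ | (u : K) ∈ Set.range ⇑v}) =>
      (∃ m, (u : K) ≤ t ^ m) ∧ (∃ m, ((u⁻¹ : Kˣ) : K) ≤ t ^ m))
    (fun u hu => hgen u hu)
    ⟨⟨0, by simp⟩, ⟨0, by simp⟩⟩
    (fun u z hu hz ⟨⟨m1, h1⟩, ⟨m1', h1'⟩⟩ ⟨⟨m2, h2⟩, ⟨m2', h2'⟩⟩ =>
      ⟨⟨m1 + m2, by rw [Units.val_mul]; exact hmul _ _ _ _ h1 h2⟩,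
       ⟨m2' + m1', by rw [mul_inv_rev, Units.val_mul]; exact hmul _ _ _ _ h2' h1'⟩⟩)
    (fun u hu ⟨h1, h2⟩ => ⟨h2, by rw [inv_inv]; exact h1⟩)
    hx
  exact hmem.1
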